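/- Let k be a field of characteristic zero. The cubic surface in ℙ³_k defined by 2(x₀³+x₁³+x₂³+x₃³) - 3(x₀²x₁ + x₀x₁² + x₂²x₃ + x₂x₃²) = 0 is smooth. -/
import Mathlib


open MvPolynomial

private theorem pderiv_two {σ R : Type*} [CommSemiring R] (i : σ) :
    pderiv i (2 : MvPolynomial σ R) = 0 := by
  rw [← map_ofNat (C : R →+* MvPolynomial σ R) 2, pderiv_C]

private theorem pderiv_three {σ R : Type*} [CommSemiring R] (i : σ) :
    pderiv i (3 : MvPolynomial σ R) = 0 := by
  rw [← map_ofNat (C : R →+* MvPolynomial σ R) 3, pderiv_C]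

/-- The cubic surface `2(x₀³+x₁³+x₂³+x₃³) - 3(x₀²x₁ + x₀x₁² + x₂²x₃ + x₂x₃²) = 0` in
`ℙ³` over a field of characteristic zero is smooth: the cubic form and its partial
derivatives have no common nonzero zero over the algebraic closure. -/
theorem stmt12 (k : Type*) [Field k] [CharZero k]
    (F : MvPolynomial (Fin 4) k)
    (hF : F = 2 * (X 0 ^ 3 + X 1 ^ 3 + X 2 ^ 3 + X 3 ^ 3) -
      3 * (X 0 ^ 2 * X 1 + X 0 * X 1 ^ 2 + X 2 ^ 2 * X 3 + X 2 * X 3 ^ 2)) :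
    ∀ v : Fin 4 → AlgebraicClosure k, v ≠ 0 →
      ¬ (eval v (MvPolynomial.map (algebraMap k (AlgebraicClosure k)) F) = 0 ∧
        ∀ i : Fin 4,
          eval v (pderiv i (MvPolynomial.map (algebraMap k (AlgebraicClosure k)) F))
            = 0) := by
  intro v hv h
  obtain ⟨-, hd⟩ := h
  subst hF
  have hchar : CharZero (AlgebraicClosure k) :=
    charZero_of_injective_algebraMap (algebraMap k (AlgebraicClosure k)).injective
  have h0 := hd 0
  have h1 := hd 1
  have h2 := hd 2
  have h3 := hd 3
  simp only [map_sub, map_mul, map_add, map_pow, MvPolynomial.map_X, map_ofNat,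
    Derivation.leibniz, pderiv_X, Pi.single, Function.update, smul_eq_mul,
    Derivation.leibniz_pow, pderiv_two, pderiv_three] at h0 h1 h2 h3
  simp at h0 h1 h2 h3
  set a := v 0; set b := v 1; set c := v 2; set d := v 3
  have h3ne : (3 : AlgebraicClosure k) ≠ 0 := three_ne_zero
  -- the pair (a, b)
  have ha2 : a ^ 2 = 2 * (a * b) := by linear_combination (2 * h0 + h1) / 9
  have hb2 : b ^ 2 = 2 * (a * b) := by linear_combination (h0 + 2 * h1) / 9
  have hp : 3 * (a * b) ^ 2 = 0 := by
    linear_combination (-(b ^ 2)) * ha2 - 2 * (a * b) * hb2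
  have hab : a * b = 0 := by
    have : (a * b) ^ 2 = 0 := by
      rcases mul_eq_zero.mp hp with h | h
      · exact absurd h h3ne
      · exact h
    exact pow_eq_zero_iff (n := 2) (by norm_num) |>.mp this
  have ha : a = 0 := by
    have : a ^ 2 = 0 := by rw [ha2, hab, mul_zero]
    exact pow_eq_zero_iff (n := 2) (by norm_num) |>.mp this
  have hb : b = 0 := by
    have : b ^ 2 = 0 := by rw [hb2, hab, mul_zero]
    exact pow_eq_zero_iff (n := 2) (by norm_num) |>.mp this
  -- the pair (c, d)
  have hc2 : c ^ 2 = 2 * (c * d) := by linear_combination (2 * h2 + h3) / 9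
  have hd2 : d ^ 2 = 2 * (c * d) := by linear_combination (h2 + 2 * h3) / 9
  have hq : 3 * (c * d) ^ 2 = 0 := by
    linear_combination (-(d ^ 2)) * hc2 - 2 * (c * d) * hd2
  have hcd : c * d = 0 := by
    have : (c * d) ^ 2 = 0 := by
      rcases mul_eq_zero.mp hq with h | h
      · exact absurd h h3ne
      · exact h
    exact pow_eq_zero_iff (n := 2) (by norm_num) |>.mp this
  have hc : c = 0 := by
    have : c ^ 2 = 0 := by rw [hc2, hcd, mul_zero]
    exact pow_eq_zero_iff (n := 2) (by norm_num) |>.mp this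
  have hdd : d = 0 := by
    have : d ^ 2 = 0 := by rw [hd2, hcd, mul_zero]
    exact pow_eq_zero_iff (n := 2) (by norm_num) |>.mp this
  apply hv
  funext i
  fin_cases i
  · exact ha
  · exact hb
  · exact hc
  · exact hdd
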